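/- arXiv:1804.03057 — 2 statements merged into one kernel-verified Lean document; each statement's English description precedes it below -/
import Mathlib

section
/- Let C = ℝ × (ℝ/2πℤ) be the infinite cylinder and let R : C → C be the half-rotation R(x, θ) = (x, θ + π). Let Z ⊆ C be a nonempty compact set that separates the bottom of the cylinder from the top, in the sense that every continuous path γ : [0,1] → C whose starting point has first coordinate strictly less than the first coordinate of every point of Z and whose endpoint has first coordinate strictly greater than the first coordinate of every point of Z must meet Z. Then Z ∩ R(Z) ≠ ∅. -/
/-!
Cut a band containing `Z` into an `m × m` grid of cells on the quotient `ℝ × ℝ/πℤ` of the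
cylinder by `R`; each cell is a pair of boxes exchanged by `R`, its two sheets. If no point of `Z`
lies within `ε` of the half-rotation of another, then the sheet of a cell met by `Z` is the same
for adjacent occupied cells, except across the seam `θ ≡ 0`, where going once around the quotient
exchanges the sheets. The region of free cells reachable from the bottom row cannot reach the top
row because `Z` separates, and a parity count along its boundary shows that such a twisted
colouring of the occupied cells cannot exist. Compactness turns the resulting near pairs, for every
`ε`, into a point of `Z ∩ R(Z)`.
-/

open Set Real

noncomputable section

/-- The infinite cylinder `C = ℝ × (ℝ/2πℤ)`. -/
abbrev Cylinder := ℝ × AddCircle (2 * π)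

/-- The half-rotation `R(x, θ) = (x, θ + π)` of the cylinder. -/
def halfRotation (q : Cylinder) : Cylinder := (q.1, q.2 + ((π : ℝ) : AddCircle (2 * π)))

namespace ZMod

lemma eq_zero_or_eq_one (x : ZMod 2) : x = 0 ∨ x = 1 := by
  revert x; decide

lemma eq_add_one_of_ne {a b : ZMod 2} (h : a ≠ b) : a = b + 1 := by
  revert a b; decide

lemma sum_comp_sub_one {M : Type*} [AddCommMonoid M] {m : ℕ} [NeZero m] (f : ZMod m → M) :
    ∑ x, f (x - 1) = ∑ x, f x :=
  Fintype.sum_equiv (Equiv.subRight 1) _ _ fun _ => rfl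

lemma sum_comp_add_one {M : Type*} [AddCommMonoid M] {m : ℕ} [NeZero m] (f : ZMod m → M) :
    ∑ x, f (x + 1) = ∑ x, f x :=
  Fintype.sum_equiv (Equiv.addRight 1) _ _ fun _ => rfl

variable {m : ℕ} [NeZero m]

lemma natCast_val_add_one (k : ZMod m) : ((k.val + 1 : ℕ) : ZMod m) = k + 1 := by
  push_cast [natCast_zmod_val]; rfl

lemma val_add_one_of_ne_zero {k : ZMod m} (hk : k + 1 ≠ 0) : (k + 1).val = k.val + 1 := by
  rw [← natCast_val_add_one, val_natCast, Nat.mod_eq_of_lt]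
  refine lt_of_le_of_ne (val_lt k) fun h => hk ?_
  rw [← natCast_val_add_one, h, natCast_self]

lemma val_add_one_of_eq_zero {k : ZMod m} (hk : k + 1 = 0) : k.val + 1 = m := by
  rw [← natCast_val_add_one, natCast_eq_zero_iff] at hk
  exact le_antisymm (val_lt k) (Nat.le_of_dvd k.val.succ_pos hk)

end ZMod

lemma continuous_halfRotation : Continuous halfRotation :=
  continuous_fst.prodMk (continuous_snd.add continuous_const)

lemma IsCompact.inter_image_nonempty_of_forall_exists_dist_le {X : Type*} [MetricSpace X]
    {Z : Set X} (hZ : IsCompact Z) {f : X → X} (hf : Continuous f)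
    (h : ∀ ε > 0, ∃ z ∈ Z, ∃ z' ∈ Z, dist (f z) z' ≤ ε) : (Z ∩ f '' Z).Nonempty := by
  by_contra hZf
  obtain ⟨r, hr, hfar⟩ := Metric.exists_pos_forall_lt_edist (hZ.image hf) hZ.isClosed
    (disjoint_iff_inter_eq_empty.mpr (inter_comm Z _ ▸ not_nonempty_iff_eq_empty.mp hZf))
  obtain ⟨z, hz, z', hz', hzz'⟩ := h (r / 2) (by positivity)
  have := hfar (f z) (mem_image_of_mem f hz) z' hz'
  rw [edist_dist, ENNReal.coe_lt_ofReal] at this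
  linarith [half_lt_self (show (0 : ℝ) < r from hr)]

def SeparatesEnds (Z : Set Cylinder) : Prop :=
  ∀ γ : ℝ → Cylinder, ContinuousOn γ (Icc (0 : ℝ) 1) →
    (∀ z ∈ Z, (γ 0).1 < z.1) → (∀ z ∈ Z, z.1 < (γ 1).1) → ∃ t ∈ Icc (0 : ℝ) 1, γ t ∈ Z

namespace CylinderGrid

open Finset

variable {n R : ℕ}

/-- `hEdge χ k j` is the edge between the cells `(k, j - 1)` and `(k, j)`, from the vertex `(k, j)`
to `(k + 1, j)`; `vEdge χ k j` is the edge between `(k - 1, j)` and `(k, j)`, from `(k, j)` to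
`(k, j + 1)`. The value `1` means the edge lies on the mod 2 boundary of `χ`. -/
def hEdge (χ : ZMod n → ZMod R → ZMod 2) (k : ZMod n) (j : ZMod R) : ZMod 2 :=
  χ k j + χ k (j - 1)

def vEdge (χ : ZMod n → ZMod R → ZMod 2) (k : ZMod n) (j : ZMod R) : ZMod 2 :=
  χ k j + χ (k - 1) j

lemma sum_hEdge_eq_zero [NeZero R] (χ : ZMod n → ZMod R → ZMod 2) (k : ZMod n) :
    ∑ j, hEdge χ k j = 0 := by
  simp only [hEdge, sum_add_distrib, ZMod.sum_comp_sub_one (χ k)]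
  exact CharTwo.add_self_eq_zero _

/-- Each vertex meets an even number of edges of the mod 2 boundary of `χ`. -/
lemma sum_edge_mul_eq_zero [NeZero n] [NeZero R] (χ φ : ZMod n → ZMod R → ZMod 2) :
    ∑ k, ∑ j, (hEdge χ k j * (φ k j + φ (k + 1) j) + vEdge χ k j * (φ k j + φ k (j + 1))) = 0 := by
  have hshift : ∑ k, ∑ j, hEdge χ k j * φ (k + 1) j = ∑ k, ∑ j, hEdge χ (k - 1) j * φ k j := by
    rw [← ZMod.sum_comp_sub_one fun k => ∑ j, hEdge χ k j * φ (k + 1) j]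
    simp only [sub_add_cancel]
  have vshift : ∀ k, ∑ j, vEdge χ k j * φ k (j + 1) = ∑ j, vEdge χ k (j - 1) * φ k j := by
    intro k
    rw [← ZMod.sum_comp_sub_one fun j => vEdge χ k j * φ k (j + 1)]
    simp only [sub_add_cancel]
  calc _ = ∑ k, ∑ j,
        (hEdge χ k j + hEdge χ (k - 1) j + vEdge χ k j + vEdge χ k (j - 1)) * φ k j := by
        simp only [mul_add, add_mul, sum_add_distrib, hshift, vshift]
        ring
    _ = 0 := by
        refine sum_eq_zero fun k _ => sum_eq_zero fun j _ => ?_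
        have h2 : (2 : ZMod 2) = 0 := rfl
        simp only [hEdge, vEdge]
        linear_combination (χ k j + χ k (j - 1) + χ (k - 1) j + χ (k - 1) (j - 1)) * φ k j * h2

/-- Adjacency of rows: unlike columns, rows do not wrap around from `-1` to `0`. -/
def RowAdj (a b : ZMod R) : Prop :=
  b = a ∨ (b = a + 1 ∧ b ≠ 0) ∨ (a = b + 1 ∧ a ≠ 0)

def ColAdj (a b : ZMod n) : Prop :=
  b = a ∨ b = a + 1 ∨ a = b + 1

lemma RowAdj.symm {a b : ZMod R} (h : RowAdj a b) : RowAdj b a := by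
  rcases h with h | h | h
  · exact Or.inl h.symm
  · exact Or.inr (Or.inr h)
  · exact Or.inr (Or.inl h)

lemma ColAdj.symm {a b : ZMod n} (h : ColAdj a b) : ColAdj b a := by
  rcases h with h | h | h
  · exact Or.inl h.symm
  · exact Or.inr (Or.inr h)
  · exact Or.inr (Or.inl h)

lemma rowAdj_of_mem_pair {j a b : ZMod R} (hj : j ≠ 0) (ha : a = j ∨ a = j - 1)
    (hb : b = j ∨ b = j - 1) : RowAdj a b := by
  rcases ha with rfl | rfl <;> rcases hb with rfl | rfl
  · exact Or.inl rfl
  · exact Or.inr (Or.inr ⟨(sub_add_cancel _ _).symm, hj⟩)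
  · exact Or.inr (Or.inl ⟨(sub_add_cancel _ _).symm, hj⟩)
  · exact Or.inl rfl

section Reachable

variable (Y : ZMod n × ZMod R → Prop)

def FreeAdj (f g : ZMod n × ZMod R) : Prop :=
  ¬ Y f ∧ ¬ Y g ∧ ColAdj f.1 g.1 ∧ RowAdj f.2 g.2

def Reachable (f : ZMod n × ZMod R) : Prop :=
  ¬ Y f ∧ ∃ s : ZMod n × ZMod R, s.2 = 0 ∧ Relation.ReflTransGen (FreeAdj Y) s f

open Classical in
def reachInd (k : ZMod n) (j : ZMod R) : ZMod 2 :=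
  if Reachable Y (k, j) then 1 else 0

variable {Y}

lemma Reachable.step {f g : ZMod n × ZMod R} (hf : Reachable Y f) (hg : ¬ Y g)
    (hcol : ColAdj f.1 g.1) (hrow : RowAdj f.2 g.2) : Reachable Y g :=
  let ⟨hYf, s, hs, hsf⟩ := hf
  ⟨hg, s, hs, hsf.tail ⟨hYf, hg, hcol, hrow⟩⟩

lemma blocked_or_blocked_of_reachInd_add_eq_one {f g : ZMod n × ZMod R} (hcol : ColAdj f.1 g.1)
    (hrow : RowAdj f.2 g.2)
    (h : reachInd Y f.1 f.2 + reachInd Y g.1 g.2 = 1) : Y f ∨ Y g := by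
  by_contra! hfg
  unfold reachInd at h
  by_cases hf : Reachable Y f <;> by_cases hg : Reachable Y g
  · simp [hf, hg] at h
  · exact hg (hf.step hfg.2 hcol hrow)
  · exact hf (hg.step hfg.1 hcol.symm hrow.symm)
  · simp [hf, hg] at h

lemma reachInd_row_zero (hbot : ∀ f : ZMod n × ZMod R, f.2 = 0 → ¬ Y f) (k : ZMod n) :
    reachInd Y k 0 = 1 :=
  if_pos ⟨hbot (k, 0) rfl, (k, 0), rfl, .refl⟩

lemma reachInd_row_neg_one (htop : ∀ f, Reachable Y f → f.2 ≠ -1) (k : ZMod n) :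
    reachInd Y k (-1) = 0 :=
  if_neg fun h => htop _ h rfl

end Reachable

section Coloring

variable (Y : ZMod n × ZMod R → Prop) (Φ : ZMod n × ZMod R → ZMod 2)

def seam (k : ZMod n) : ZMod 2 := if k = 0 then 1 else 0

structure IsTwistedColoring : Prop where
  sameCol : ∀ y y', Y y → Y y' → RowAdj y.2 y'.2 → y'.1 = y.1 → Φ y' = Φ y
  nextCol : ∀ y y', Y y → Y y' → RowAdj y.2 y'.2 → y'.1 = y.1 + 1 → Φ y' = Φ y + seam y'.1

def Touches (k : ZMod n) (j : ZMod R) (y : ZMod n × ZMod R) : Prop :=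
  (y.1 = k ∨ y.1 = k - 1) ∧ (y.2 = j ∨ y.2 = j - 1)

/-- The colour of a cell as seen from a vertex in column `k`: a cell of column `k - 1` lies across
a column boundary, which is the seam when `k = 0`. -/
def gaugedColor (k : ZMod n) (y : ZMod n × ZMod R) : ZMod 2 :=
  Φ y + if y.1 = k then 0 else seam k

open Classical in
def cornerColor (k : ZMod n) (j : ZMod R) : ZMod 2 :=
  if h : ∃ y, Touches k j y ∧ Y y then gaugedColor Φ k h.choose else 0

variable {Y Φ}

lemma gaugedColor_of_eq {k : ZMod n} {y : ZMod n × ZMod R} (h : y.1 = k) :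
    gaugedColor Φ k y = Φ y := by
  rw [gaugedColor, if_pos h, add_zero]

variable [Nontrivial (ZMod n)]

lemma gaugedColor_of_eq_sub_one {k : ZMod n} {y : ZMod n × ZMod R} (h : y.1 = k - 1) :
    gaugedColor Φ k y = Φ y + seam k := by
  rw [gaugedColor, if_neg (by rw [h]; exact pred_ne_self k)]

lemma gaugedColor_eq_of_touches (hΦ : IsTwistedColoring Y Φ) {k : ZMod n} {j : ZMod R}
    (hj : j ≠ 0) {y y' : ZMod n × ZMod R} (hy : Touches k j y) (hYy : Y y) (hy' : Touches k j y')
    (hYy' : Y y') : gaugedColor Φ k y = gaugedColor Φ k y' := by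
  have across : ∀ a b, Touches k j a → Touches k j b → Y a → Y b → a.1 = k - 1 → b.1 = k →
      gaugedColor Φ k a = gaugedColor Φ k b := fun a b ha hb hYa hYb ha1 hb1 => by
    rw [gaugedColor_of_eq_sub_one ha1, gaugedColor_of_eq hb1,
      hΦ.nextCol a b hYa hYb (rowAdj_of_mem_pair hj ha.2 hb.2) (by rw [ha1, hb1, sub_add_cancel]),
      hb1]
  have within : ∀ a b, Touches k j a → Touches k j b → Y a → Y b → b.1 = a.1 →
      gaugedColor Φ k a = gaugedColor Φ k b := fun a b ha hb hYa hYb hab => by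
    rw [gaugedColor, gaugedColor, hab, hΦ.sameCol a b hYa hYb (rowAdj_of_mem_pair hj ha.2 hb.2) hab]
  rcases hy.1 with hc | hc <;> rcases hy'.1 with hc' | hc'
  · exact within y y' hy hy' hYy hYy' (hc'.trans hc.symm)
  · exact (across y' y hy' hy hYy' hYy hc' hc).symm
  · exact across y y' hy hy' hYy hYy' hc hc'
  · exact within y y' hy hy' hYy hYy' (hc'.trans hc.symm)

lemma cornerColor_eq (hΦ : IsTwistedColoring Y Φ) {k : ZMod n} {j : ZMod R} (hj : j ≠ 0)
    {y : ZMod n × ZMod R} (hy : Touches k j y) (hYy : Y y) :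
    cornerColor Y Φ k j = gaugedColor Φ k y := by
  have hex : ∃ y, Touches k j y ∧ Y y := ⟨y, hy, hYy⟩
  rw [cornerColor, dif_pos hex]
  exact gaugedColor_eq_of_touches hΦ hj hex.choose_spec.1 hex.choose_spec.2 hy hYy

lemma hEdge_mul_cornerColor (hΦ : IsTwistedColoring Y Φ) {k : ZMod n} {j : ZMod R} (hj : j ≠ 0) :
    hEdge (reachInd Y) k j * (cornerColor Y Φ k j + cornerColor Y Φ (k + 1) j) =
      hEdge (reachInd Y) k j * seam (k + 1) := by
  rcases ZMod.eq_zero_or_eq_one (hEdge (reachInd Y) k j) with h | h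
  · rw [h, zero_mul, zero_mul]
  obtain ⟨y, hYy, hy1, hy2⟩ : ∃ y, Y y ∧ y.1 = k ∧ (y.2 = j ∨ y.2 = j - 1) := by
    rcases blocked_or_blocked_of_reachInd_add_eq_one (f := (k, j)) (g := (k, j - 1)) (Or.inl rfl)
      (Or.inr (Or.inr ⟨(sub_add_cancel _ _).symm, hj⟩)) h with hY | hY
    exacts [⟨_, hY, rfl, Or.inl rfl⟩, ⟨_, hY, rfl, Or.inr rfl⟩]
  have hk : y.1 = k + 1 - 1 := by rw [hy1, add_sub_cancel_right]
  rw [cornerColor_eq hΦ hj ⟨Or.inl hy1, hy2⟩ hYy, cornerColor_eq hΦ hj ⟨Or.inr hk, hy2⟩ hYy,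
    gaugedColor_of_eq hy1, gaugedColor_of_eq_sub_one hk, ← add_assoc, CharTwo.add_self_eq_zero,
    zero_add]

lemma vEdge_mul_cornerColor (hΦ : IsTwistedColoring Y Φ)
    (hbot : ∀ f : ZMod n × ZMod R, f.2 = 0 → ¬ Y f) (htop : ∀ f, Reachable Y f → f.2 ≠ -1)
    (k : ZMod n) (j : ZMod R) :
    vEdge (reachInd Y) k j * (cornerColor Y Φ k j + cornerColor Y Φ k (j + 1)) = 0 := by
  rcases ZMod.eq_zero_or_eq_one (vEdge (reachInd Y) k j) with h | h
  · rw [h, zero_mul]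
  have hj : j ≠ 0 := by
    rintro rfl
    simp [vEdge, reachInd_row_zero hbot] at h
  have hj' : j + 1 ≠ 0 := by
    intro hj'
    rw [eq_neg_of_add_eq_zero_left hj'] at h
    simp [vEdge, reachInd_row_neg_one htop] at h
  obtain ⟨y, hYy, hy1, hy2⟩ : ∃ y, Y y ∧ (y.1 = k ∨ y.1 = k - 1) ∧ y.2 = j := by
    rcases blocked_or_blocked_of_reachInd_add_eq_one (f := (k, j)) (g := (k - 1, j))
      (Or.inr (Or.inr (sub_add_cancel _ _).symm)) (Or.inl rfl) h with hY | hY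
    exacts [⟨_, hY, Or.inl rfl, rfl⟩, ⟨_, hY, Or.inr rfl, rfl⟩]
  rw [cornerColor_eq hΦ hj ⟨hy1, Or.inl hy2⟩ hYy,
    cornerColor_eq hΦ hj' ⟨hy1, Or.inr (by rw [hy2, add_sub_cancel_right])⟩ hYy,
    CharTwo.add_self_eq_zero, mul_zero]

variable [NeZero n]

lemma sum_hEdge_mul_cornerColor (hΦ : IsTwistedColoring Y Φ)
    (hbot : ∀ f : ZMod n × ZMod R, f.2 = 0 → ¬ Y f) (htop : ∀ f, Reachable Y f → f.2 ≠ -1)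
    (j : ZMod R) :
    ∑ k, hEdge (reachInd Y) k j * (cornerColor Y Φ k j + cornerColor Y Φ (k + 1) j) =
      hEdge (reachInd Y) (-1) j + seam j := by
  by_cases hj : j = 0
  · subst hj
    have h1 : ∀ k, hEdge (reachInd Y) k 0 = 1 := fun k => by
      rw [hEdge, zero_sub, reachInd_row_zero hbot, reachInd_row_neg_one htop, add_zero]
    simp only [h1, one_mul, sum_add_distrib, ZMod.sum_comp_add_one (fun k => cornerColor Y Φ k 0),
      seam, ↓reduceIte, CharTwo.add_self_eq_zero]
  · rw [sum_congr rfl fun k _ => hEdge_mul_cornerColor hΦ hj, seam, if_neg hj, add_zero]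
    simp [seam, add_eq_zero_iff_eq_neg]

/-- The boundary of the region reachable from the bottom row crosses the seam an odd number of
times, which is incompatible with a twisted colouring of the cells along it. -/
theorem not_isTwistedColoring [NeZero R] (hbot : ∀ f : ZMod n × ZMod R, f.2 = 0 → ¬ Y f)
    (htop : ∀ f, Reachable Y f → f.2 ≠ -1) : ¬ IsTwistedColoring Y Φ := by
  intro hΦ
  have h := sum_edge_mul_eq_zero (reachInd Y) (cornerColor Y Φ)
  simp only [vEdge_mul_cornerColor hΦ hbot htop, add_zero] at h
  rw [sum_comm] at h
  simp only [sum_hEdge_mul_cornerColor hΦ hbot htop, sum_add_distrib, sum_hEdge_eq_zero,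
    zero_add] at h
  simp [seam] at h

end Coloring

/-- `c ↦ c • π`, well defined because `2π = 0` on the circle. -/
def halfTurn : ZMod 2 →+ AddCircle (2 * π) :=
  ZMod.lift 2 ⟨zmultiplesHom _ (π : AddCircle (2 * π)), by
    rw [zmultiplesHom_apply, natCast_zsmul, ← AddCircle.coe_nsmul, nsmul_eq_mul, Nat.cast_ofNat,
      AddCircle.coe_period]⟩

lemma halfTurn_one : halfTurn 1 = (π : AddCircle (2 * π)) := by
  have h : halfTurn ((1 : ℤ) : ZMod 2) = (π : AddCircle (2 * π)) := by
    rw [halfTurn, ZMod.lift_coe, zmultiplesHom_apply, one_zsmul]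
  simpa using h

variable (y₀ d : ℝ) (m : ℕ)

def rowCenter (j : ZMod m) : ℝ := y₀ + j.val * d

def colCenter (k : ZMod m) : ℝ := k.val * (π / m)

/-- The cell `f` is the union of the two sheets `c = 0, 1`, which are exchanged by the
half-rotation. -/
def sheet (f : ZMod m × ZMod m) (c : ZMod 2) : Set Cylinder :=
  {p | |p.1 - rowCenter y₀ d m f.2| ≤ d / 2 ∧
    ∃ a : ℝ, |a - colCenter m f.1| ≤ π / m / 2 ∧ p.2 = a + halfTurn c}

variable {y₀ d m}

lemma abs_rowCenter_sub_le [NeZero m] (hd : 0 ≤ d) {j j' : ZMod m} (h : RowAdj j j') :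
    |rowCenter y₀ d m j' - rowCenter y₀ d m j| ≤ d := by
  rcases h with rfl | ⟨rfl, h⟩ | ⟨rfl, h⟩
  · simpa using hd
  · simp [rowCenter, ZMod.val_add_one_of_ne_zero h, add_mul, abs_of_nonneg hd]
  · simp [rowCenter, ZMod.val_add_one_of_ne_zero h, add_mul, abs_of_nonneg hd]

lemma colCenter_add [NeZero m] (k : ZMod m) :
    ((colCenter m k + π / m : ℝ) : AddCircle (2 * π)) =
      colCenter m (k + 1) + halfTurn (seam (k + 1)) := by
  by_cases hk : k + 1 = 0
  · have hm : (m : ℝ) ≠ 0 := Nat.cast_ne_zero.mpr (NeZero.ne m)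
    rw [colCenter, colCenter, hk, seam, if_pos rfl, halfTurn_one, ZMod.val_zero, Nat.cast_zero,
      zero_mul, AddCircle.coe_zero, zero_add, ← add_one_mul, ← Nat.cast_add_one,
      ZMod.val_add_one_of_eq_zero hk, mul_div_cancel₀ _ hm]
  · rw [colCenter, colCenter, ZMod.val_add_one_of_ne_zero hk, seam, if_neg hk, map_zero,
      add_zero, Nat.cast_succ, add_one_mul]

lemma exists_colCenter_add [NeZero m] {k k' : ZMod m} (h : ColAdj k k') :
    ∃ δ : ℝ, |δ| ≤ π / m ∧ ∃ e : ZMod 2,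
      ((colCenter m k + δ : ℝ) : AddCircle (2 * π)) = colCenter m k' + halfTurn e := by
  have hw : 0 ≤ π / m := by positivity
  rcases h with rfl | rfl | rfl
  · exact ⟨0, by simpa using hw, 0, by simp⟩
  · exact ⟨π / m, (abs_of_nonneg hw).le, _, colCenter_add _⟩
  · refine ⟨-(π / m), (abs_neg (π / m) ▸ abs_of_nonneg hw).le, seam (k' + 1), ?_⟩
    have h := colCenter_add (m := m) k'
    rw [AddCircle.coe_add] at h
    rw [AddCircle.coe_add, eq_sub_of_add_eq h.symm, AddCircle.coe_neg, sub_add_eq_add_sub,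
      add_neg_cancel_right, sub_eq_add_neg, ← map_neg, ZMod.neg_eq_self_mod_two]

variable (y₀ d m)

def center (f : ZMod m × ZMod m) (c : ZMod 2) : Cylinder :=
  (rowCenter y₀ d m f.2, (colCenter m f.1 : AddCircle (2 * π)) + halfTurn c)

variable {y₀ d m}

lemma center_mem_sheet (hd : 0 ≤ d) (f : ZMod m × ZMod m) (c : ZMod 2) :
    center y₀ d m f c ∈ sheet y₀ d m f c :=
  ⟨by simp [center]; positivity, colCenter m f.1, by simp; positivity, rfl⟩

lemma segment_mem_sheet (hd : 0 ≤ d) {b g : ZMod m × ZMod m} {c c' : ZMod 2} {δ : ℝ}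
    (hrow : |rowCenter y₀ d m g.2 - rowCenter y₀ d m b.2| ≤ d) (hδ : |δ| ≤ π / m)
    (hcol : ((colCenter m b.1 + δ : ℝ) : AddCircle (2 * π)) + halfTurn c =
      colCenter m g.1 + halfTurn c') {t : ℝ} (ht0 : 0 ≤ t) (ht1 : t ≤ 1) :
    ((rowCenter y₀ d m b.2 + t * (rowCenter y₀ d m g.2 - rowCenter y₀ d m b.2),
      ((colCenter m b.1 + t * δ : ℝ) : AddCircle (2 * π)) + halfTurn c) : Cylinder) ∈
      sheet y₀ d m b c ∪ sheet y₀ d m g c' := by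
  rcases le_total t (1 / 2) with ht | ht
  · refine Or.inl ⟨?_, colCenter m b.1 + t * δ, ?_, rfl⟩
    · rw [add_sub_cancel_left, abs_mul, abs_of_nonneg ht0]
      nlinarith [abs_nonneg (rowCenter y₀ d m g.2 - rowCenter y₀ d m b.2)]
    · rw [add_sub_cancel_left, abs_mul, abs_of_nonneg ht0]
      nlinarith [abs_nonneg δ]
  · refine Or.inr ⟨?_, colCenter m g.1 + (t - 1) * δ, ?_, ?_⟩
    · rw [show rowCenter y₀ d m b.2 + t * (rowCenter y₀ d m g.2 - rowCenter y₀ d m b.2) -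
          rowCenter y₀ d m g.2 = (1 - t) * -(rowCenter y₀ d m g.2 - rowCenter y₀ d m b.2) by ring,
        abs_mul, abs_neg, abs_of_nonneg (by linarith : 0 ≤ 1 - t)]
      nlinarith [abs_nonneg (rowCenter y₀ d m g.2 - rowCenter y₀ d m b.2)]
    · rw [add_sub_cancel_left, abs_mul, abs_of_nonpos (by linarith : t - 1 ≤ 0)]
      nlinarith [abs_nonneg δ]
    · rw [show colCenter m b.1 + t * δ = (colCenter m b.1 + δ) + (t - 1) * δ by ring,
        AddCircle.coe_add, add_right_comm, hcol, AddCircle.coe_add, add_right_comm]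

variable (y₀ d m) in
def Occupied (Z : Set Cylinder) (f : ZMod m × ZMod m) : Prop :=
  ∃ c, (Z ∩ sheet y₀ d m f c).Nonempty

variable {Z : Set Cylinder}

lemma not_mem_of_mem_sheet {f : ZMod m × ZMod m} (hf : ¬ Occupied y₀ d m Z f) {c : ZMod 2}
    {p : Cylinder} (hp : p ∈ sheet y₀ d m f c) : p ∉ Z :=
  fun hpZ => hf ⟨c, p, hpZ, hp⟩

lemma exists_path_of_freeAdj [NeZero m] (hd : 0 ≤ d) {b g : ZMod m × ZMod m}
    (h : FreeAdj (Occupied y₀ d m Z) b g) (c : ZMod 2) :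
    ∃ c', ∃ γ : Path (center y₀ d m b c) (center y₀ d m g c'), range γ ⊆ Zᶜ := by
  obtain ⟨hb, hg, hcol, hrow⟩ := h
  obtain ⟨δ, hδ, e, he⟩ := exists_colCenter_add hcol
  have he' : ((colCenter m b.1 + δ : ℝ) : AddCircle (2 * π)) + halfTurn c =
      colCenter m g.1 + halfTurn (c + e) := by
    rw [he, map_add, add_assoc, add_comm (halfTurn e)]
  let φ : ℝ × ℝ → Cylinder := fun q => (q.1, (q.2 : AddCircle (2 * π)) + halfTurn c)
  let γ := (Path.segment (rowCenter y₀ d m b.2, colCenter m b.1)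
    (rowCenter y₀ d m g.2, colCenter m b.1 + δ)).map (f := φ) (by fun_prop)
  refine ⟨c + e, γ.cast rfl (Prod.ext rfl he'.symm), ?_⟩
  rintro _ ⟨t, rfl⟩
  have hγt : γ t = ((rowCenter y₀ d m b.2 + t * (rowCenter y₀ d m g.2 - rowCenter y₀ d m b.2),
      ((colCenter m b.1 + t * δ : ℝ) : AddCircle (2 * π)) + halfTurn c) : Cylinder) := by
    change φ (Path.segment _ _ t) = _
    simp only [φ, Path.segment_apply, AffineMap.lineMap_apply_module, Prod.smul_mk, Prod.mk_add_mk,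
      smul_eq_mul]
    exact Prod.ext (by ring)
      (congrArg (fun a : ℝ => (a : AddCircle (2 * π)) + halfTurn c) (by ring))
  rcases segment_mem_sheet hd (abs_rowCenter_sub_le hd hrow) hδ he' t.2.1 t.2.2 with hp | hp
  · exact not_mem_of_mem_sheet hb (hγt ▸ hp)
  · exact not_mem_of_mem_sheet hg (hγt ▸ hp)

lemma exists_path_of_reflTransGen [NeZero m] (hd : 0 ≤ d) {s f : ZMod m × ZMod m}
    (h : Relation.ReflTransGen (FreeAdj (Occupied y₀ d m Z)) s f) (hs : ¬ Occupied y₀ d m Z s) :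
    ∃ c, ∃ γ : Path (center y₀ d m s 0) (center y₀ d m f c), range γ ⊆ Zᶜ := by
  induction h with
  | refl =>
    refine ⟨0, Path.refl _, ?_⟩
    rw [Path.refl_range, Set.singleton_subset_iff]
    exact not_mem_of_mem_sheet hs (center_mem_sheet hd s 0)
  | tail _ hbg ih =>
    obtain ⟨c, γ, hγ⟩ := ih
    obtain ⟨c', γ', hγ'⟩ := exists_path_of_freeAdj hd hbg c
    exact ⟨c', γ.trans γ', by rw [Path.trans_range]; exact union_subset hγ hγ'⟩

lemma not_occupied_of_snd_eq_zero (hbot : ∀ z ∈ Z, y₀ + d / 2 < z.1) {f : ZMod m × ZMod m}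
    (hf : f.2 = 0) : ¬ Occupied y₀ d m Z f := by
  rintro ⟨c, z, hz, hzf, -⟩
  have := hbot z hz
  rw [rowCenter, hf, ZMod.val_zero, Nat.cast_zero, zero_mul, add_zero] at hzf
  linarith [le_abs_self (z.1 - y₀)]

lemma reachable_snd_ne_neg_one [NeZero m] (hd : 0 ≤ d) (hbot : ∀ z ∈ Z, y₀ + d / 2 < z.1)
    (htop : ∀ z ∈ Z, z.1 < y₀ + (m - 1) * d) (hsep : SeparatesEnds Z) {f : ZMod m × ZMod m}
    (hf : Reachable (Occupied y₀ d m Z) f) : f.2 ≠ -1 := by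
  intro hf2
  obtain ⟨-, s, hs, hsf⟩ := hf
  obtain ⟨c, γ, hγ⟩ := exists_path_of_reflTransGen hd hsf (not_occupied_of_snd_eq_zero hbot hs)
  have hval : ((-1 : ZMod m).val : ℝ) = m - 1 := by
    rw [eq_sub_iff_add_eq, ← Nat.cast_add_one, ZMod.val_add_one_of_eq_zero (neg_add_cancel 1)]
  obtain ⟨t, ht, hγt⟩ := hsep γ.extend γ.continuous_extend.continuousOn
    (fun z hz => by
      rw [Path.extend_zero, center, rowCenter, hs, ZMod.val_zero, Nat.cast_zero, zero_mul, add_zero]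
      linarith [hbot z hz])
    (fun z hz => by
      rw [Path.extend_one, center, rowCenter, hf2, hval]
      exact htop z hz)
  rw [Path.extend_apply γ ht] at hγt
  exact hγ (mem_range_self _) hγt

lemma dist_halfRotation_le {y y' : ZMod m × ZMod m} {c e : ZMod 2} {δ : ℝ}
    (hrow : |rowCenter y₀ d m y'.2 - rowCenter y₀ d m y.2| ≤ d) (hδ : |δ| ≤ π / m)
    (hcol : ((colCenter m y.1 + δ : ℝ) : AddCircle (2 * π)) = colCenter m y'.1 + halfTurn e)
    {z z' : Cylinder} (hz : z ∈ sheet y₀ d m y c) (hz' : z' ∈ sheet y₀ d m y' (c + e + 1)) :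
    dist (halfRotation z) z' ≤ 2 * max d (π / m) := by
  obtain ⟨hx, a, ha, hza⟩ := hz
  obtain ⟨hx', a', ha', hza'⟩ := hz'
  set b := a' - colCenter m y'.1 + (colCenter m y.1 + δ)
  have hzb : z'.2 = (b : AddCircle (2 * π)) + halfTurn c + π := by
    rw [hza', AddCircle.coe_add, hcol, map_add, map_add, halfTurn_one, AddCircle.coe_sub]
    abel
  rw [Prod.dist_eq, max_le_iff]
  constructor
  · rw [halfRotation, Real.dist_eq, abs_le]
    obtain ⟨h1, h2⟩ := abs_le.mp hx
    obtain ⟨h1', h2'⟩ := abs_le.mp hx'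
    obtain ⟨h1'', h2''⟩ := abs_le.mp hrow
    constructor <;> linarith [le_max_left d (π / m)]
  · change dist (z.2 + (π : AddCircle (2 * π))) z'.2 ≤ _
    rw [hza, hzb, dist_add_right, dist_add_right, dist_eq_norm, ← AddCircle.coe_sub]
    refine QuotientAddGroup.norm_mk_le_norm.trans ?_
    rw [Real.norm_eq_abs, abs_le]
    obtain ⟨h1, h2⟩ := abs_le.mp ha
    obtain ⟨h1', h2'⟩ := abs_le.mp ha'
    obtain ⟨h1'', h2''⟩ := abs_le.mp hδ
    constructor <;> linarith [le_max_right d (π / m)]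

variable (y₀ d m) in
open Classical in
def sheetColor (Z : Set Cylinder) (f : ZMod m × ZMod m) : ZMod 2 :=
  if (Z ∩ sheet y₀ d m f 0).Nonempty then 0 else 1

lemma Occupied.inter_sheet_sheetColor_nonempty {f : ZMod m × ZMod m}
    (hf : Occupied y₀ d m Z f) : (Z ∩ sheet y₀ d m f (sheetColor y₀ d m Z f)).Nonempty := by
  unfold sheetColor
  split_ifs with h0
  · exact h0
  · obtain ⟨c, hc⟩ := hf
    rcases ZMod.eq_zero_or_eq_one c with rfl | rfl
    exacts [absurd hc h0, hc]

lemma isTwistedColoring_sheetColor [NeZero m] (hd : 0 ≤ d)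
    (hfar : ∀ z ∈ Z, ∀ z' ∈ Z, 2 * max d (π / m) < dist (halfRotation z) z') :
    IsTwistedColoring (Occupied y₀ d m Z) (sheetColor y₀ d m Z) := by
  have key : ∀ y y', Occupied y₀ d m Z y → Occupied y₀ d m Z y' → RowAdj y.2 y'.2 →
      ∀ δ e, |δ| ≤ π / m →
      ((colCenter m y.1 + δ : ℝ) : AddCircle (2 * π)) = colCenter m y'.1 + halfTurn e →
      sheetColor y₀ d m Z y' = sheetColor y₀ d m Z y + e := by
    intro y y' hy hy' hrow δ e hδ hcol
    by_contra hne
    obtain ⟨z, hzZ, hz⟩ := hy.inter_sheet_sheetColor_nonempty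
    obtain ⟨z', hzZ', hz'⟩ := hy'.inter_sheet_sheetColor_nonempty
    rw [ZMod.eq_add_one_of_ne hne] at hz'
    exact (hfar z hzZ z' hzZ').not_ge
      (dist_halfRotation_le (abs_rowCenter_sub_le hd hrow) hδ hcol hz hz')
  refine ⟨fun y y' hy hy' hrow hcol => ?_, fun y y' hy hy' hrow hcol => ?_⟩
  · simpa using key y y' hy hy' hrow 0 0 (by simp; positivity) (by simp [hcol])
  · exact key y y' hy hy' hrow (π / m) _ (abs_of_nonneg (by positivity)).le
      (hcol ▸ colCenter_add y.1)

theorem exists_dist_halfRotation_le [NeZero m] [Nontrivial (ZMod m)] (hd : 0 < d)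
    (hbot : ∀ z ∈ Z, y₀ + d / 2 < z.1) (htop : ∀ z ∈ Z, z.1 < y₀ + (m - 1) * d)
    (hsep : SeparatesEnds Z) :
    ∃ z ∈ Z, ∃ z' ∈ Z, dist (halfRotation z) z' ≤ 2 * max d (π / m) := by
  by_contra! hfar
  exact not_isTwistedColoring (fun _ hf => not_occupied_of_snd_eq_zero hbot hf)
    (fun _ hf => reachable_snd_ne_neg_one hd.le hbot htop hsep hf)
    (isTwistedColoring_sheetColor hd.le hfar)

end CylinderGrid

lemma exists_dist_halfRotation_le_of_norm_le {Z : Set Cylinder} {C : ℝ} (hC : ∀ z ∈ Z, ‖z.1‖ ≤ C)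
    (hsep : SeparatesEnds Z) {ε : ℝ} (hε : 0 < ε) :
    ∃ z ∈ Z, ∃ z' ∈ Z, dist (halfRotation z) z' ≤ ε := by
  obtain ⟨m, hm⟩ := exists_nat_gt (max 2 (max (4 * C / ε + 2) (2 * π / ε)))
  simp only [max_lt_iff] at hm
  obtain ⟨hm2, hmC, hmπ⟩ := hm
  have : Fact (1 < m) := ⟨by exact_mod_cast one_lt_two.trans hm2⟩
  have hbound := fun z hz => abs_le.mp (Real.norm_eq_abs _ ▸ hC z hz)
  refine (CylinderGrid.exists_dist_halfRotation_le (y₀ := -C - ε / 2) (m := m) (half_pos hε)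
    (fun z hz => by linarith [(hbound z hz).1]) (fun z hz => ?_) hsep).imp
    fun z ⟨hz, z', hz', hzz'⟩ => ⟨hz, z', hz', hzz'.trans ?_⟩
  · have : 4 * C < (m - 2) * ε := (div_lt_iff₀ hε).mp (by linarith)
    linarith [(hbound z hz).2]
  · have hπ : π / m ≤ ε / 2 := by
      rw [div_le_iff₀ (by linarith)]
      linarith [(div_lt_iff₀ hε).mp hmπ]
    rw [max_eq_left hπ]
    linarith

theorem statement2_general (Z : Set Cylinder) (hcomp : IsCompact Z)
    (hsep : ∀ γ : ℝ → Cylinder, ContinuousOn γ (Icc (0 : ℝ) 1) →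
      (∀ z ∈ Z, (γ 0).1 < z.1) → (∀ z ∈ Z, z.1 < (γ 1).1) →
      ∃ t ∈ Icc (0 : ℝ) 1, γ t ∈ Z) :
    (Z ∩ halfRotation '' Z).Nonempty := by
  obtain ⟨C, hC⟩ := hcomp.exists_bound_of_continuousOn continuous_fst.continuousOn
  exact hcomp.inter_image_nonempty_of_forall_exists_dist_le continuous_halfRotation
    fun ε hε => exists_dist_halfRotation_le_of_norm_le hC hsep hε

/-- If a nonempty compact set `Z` in the cylinder separates the bottom from the top — i.e.
every continuous path starting strictly below all of `Z` (in the first coordinate) and ending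
strictly above all of `Z` must meet `Z` — then `Z` intersects its half-rotation `R(Z)`. -/
theorem statement2 (Z : Set Cylinder) (hne : Z.Nonempty) (hcomp : IsCompact Z)
    (hsep : ∀ γ : ℝ → Cylinder, ContinuousOn γ (Icc (0 : ℝ) 1) →
      (∀ z ∈ Z, (γ 0).1 < z.1) → (∀ z ∈ Z, z.1 < (γ 1).1) →
      ∃ t ∈ Icc (0 : ℝ) 1, γ t ∈ Z) :
    (Z ∩ halfRotation '' Z).Nonempty :=
  statement2_general Z hcomp hsep
end
end

section
/- Let K be a convex body in ℝ² and let f be a function defined on convex bodies in ℝ² that is continuous with respect to the Hausdorff metric. Then there exist a unit vector n ∈ ℝ² and a real number c such that the two convex bodies K⁻ = K ∩ {x : ⟨x, n⟩ ≤ c} and K⁺ = K ∩ {x : ⟨x, n⟩ ≥ c} have equal area (two-dimensional Lebesgue measure) and satisfy f(K⁻) = f(K⁺). -/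
open MeasureTheory Metric Set
open scoped RealInnerProductSpace

noncomputable section

/-- A convex body in `ℝ^d`: a compact convex set with nonempty interior. -/
def IsConvexBody {d : ℕ} (K : Set (EuclideanSpace ℝ (Fin d))) : Prop :=
  IsCompact K ∧ Convex ℝ K ∧ (interior K).Nonempty

/-- The space of convex bodies in `ℝ^d` (compact convex sets with nonempty interior),
topologized via the Hausdorff metric on nonempty compact subsets. -/
abbrev ConvexBodySpace (d : ℕ) :=
  {K : TopologicalSpace.NonemptyCompacts (EuclideanSpace ℝ (Fin d)) //
    Convex ℝ (K : Set (EuclideanSpace ℝ (Fin d))) ∧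
    (interior (K : Set (EuclideanSpace ℝ (Fin d)))).Nonempty}

def ConvexBodySpace.toSet {d : ℕ} (K : ConvexBodySpace d) :
    Set (EuclideanSpace ℝ (Fin d)) := K.1

/-- Build a point of `ConvexBodySpace d` from a set satisfying `IsConvexBody`. -/
def ConvexBodySpace.mk' {d : ℕ} (S : Set (EuclideanSpace ℝ (Fin d)))
    (h : IsConvexBody S) : ConvexBodySpace d :=
  ⟨⟨⟨S, h.1⟩, h.2.2.mono interior_subset⟩, h.2.1, h.2.2⟩

/-!
For every direction `n ≠ 0` there is exactly one level `c(n)` at which the hyperplane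
`⟪x, n⟫ = c(n)` bisects the area of `K`: the area below `⟪x, n⟫ = c` is continuous in `(n, c)`
because hyperplanes are null sets, and it increases strictly in `c` while the hyperplane meets
the interior of the convex body. Uniqueness makes `c(n)` continuous, and convexity then makes the
lower half `K⁻(n)` move continuously in the Hausdorff metric. As `K⁻(-n) = K⁺(n)`, the function
`n ↦ f (K⁻(n)) - f (K⁻(-n))` is odd on the connected unit circle, so it vanishes somewhere.
-/

open Filter Topology

variable {E : Type*} [NormedAddCommGroup E] [InnerProductSpace ℝ E] {A : Set E}

theorem Convex.interior_inter_nonempty_of_isOpen (hconv : Convex ℝ A)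
    (hint : (interior A).Nonempty) {U : Set E} (hU : IsOpen U) (hAU : (A ∩ U).Nonempty) :
    (interior A ∩ U).Nonempty := by
  obtain ⟨x, hxA, hxU⟩ := hAU
  have hx : x ∈ closure (interior A) := by
    rw [hconv.closure_interior_eq_closure_of_nonempty_interior hint]
    exact subset_closure hxA
  obtain ⟨y, hyU, hyA⟩ := mem_closure_iff.1 hx U hU hxU
  exact ⟨y, hyA, hyU⟩

theorem Convex.exists_mem_inter_halfSpace_dist_le (hconv : Convex ℝ A)
    (hAb : Bornology.IsBounded A) {x z n : E} {c η δ : ℝ} (hx : x ∈ A) (hz : z ∈ A)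
    (hη : 0 ≤ η) (hδ : 0 < δ) (hxc : ⟪x, n⟫ ≤ c + η) (hzc : ⟪z, n⟫ ≤ c - δ) :
    ∃ y ∈ A ∩ {y | ⟪y, n⟫ ≤ c}, dist x y ≤ η / δ * diam A := by
  -- move from `x` towards `z` just far enough to reach the half-space
  set t := η / (η + δ)
  have ht₀ : 0 ≤ t := by positivity
  have ht₁ : t ≤ 1 := div_le_one_of_le₀ (by linarith) (by positivity)
  refine ⟨x + t • (z - x), ⟨hconv.add_smul_sub_mem hx hz ⟨ht₀, ht₁⟩, ?_⟩, ?_⟩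
  · have hmix : t * (η + δ) = η := div_mul_cancel₀ η (by positivity)
    have hinner : ⟪x + t • (z - x), n⟫ = (1 - t) * ⟪x, n⟫ + t * ⟪z, n⟫ := by
      rw [inner_add_left, real_inner_smul_left, inner_sub_left]; ring
    show ⟪x + t • (z - x), n⟫ ≤ c
    linarith [mul_le_mul_of_nonneg_left hxc (sub_nonneg.2 ht₁),
      mul_le_mul_of_nonneg_left hzc ht₀]
  · rw [dist_eq_norm, sub_add_cancel_left, norm_neg, norm_smul, Real.norm_of_nonneg ht₀,
      ← dist_eq_norm']
    exact mul_le_mul (div_le_div_of_nonneg_left hη hδ (by linarith))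
      (dist_le_diam_of_mem hAb hx hz) dist_nonneg (by positivity)

theorem Convex.hausdorffDist_inter_halfSpace_le (hconv : Convex ℝ A)
    (hAb : Bornology.IsBounded A) {R : ℝ} (hR : ∀ x ∈ A, ‖x‖ ≤ R) {z n n₀ : E} {c c₀ δ η : ℝ}
    (hz : z ∈ A) (hzc : ⟪z, n₀⟫ ≤ c₀ - δ) (hδ : 0 < δ) (hη : |c - c₀| + R * ‖n - n₀‖ ≤ η)
    (hηδ : η ≤ δ / 2) :
    hausdorffDist (A ∩ {x | ⟪x, n⟫ ≤ c}) (A ∩ {x | ⟪x, n₀⟫ ≤ c₀}) ≤ η / (δ / 2) * diam A := by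
  have hclose : ∀ x ∈ A, |⟪x, n⟫ - ⟪x, n₀⟫| ≤ R * ‖n - n₀‖ := fun x hx => by
    rw [← inner_sub_right]
    exact (abs_real_inner_le_norm x _).trans
      (mul_le_mul_of_nonneg_right (hR x hx) (norm_nonneg _))
  have hη₀ : 0 ≤ η := le_trans (add_nonneg (abs_nonneg _)
    (mul_nonneg ((norm_nonneg z).trans (hR z hz)) (norm_nonneg _))) hη
  have hdc : -|c - c₀| ≤ c - c₀ ∧ c - c₀ ≤ |c - c₀| := abs_le.1 le_rfl
  refine hausdorffDist_le_of_mem_dist (by positivity) (fun x hx => ?_) (fun x hx => ?_)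
  · refine hconv.exists_mem_inter_halfSpace_dist_le hAb hx.1 hz hη₀ (by linarith) ?_ (by linarith)
    linarith [(abs_le.1 (hclose x hx.1)).1, hx.2.out]
  · refine hconv.exists_mem_inter_halfSpace_dist_le hAb hx.1 hz hη₀ (by linarith) ?_ ?_
    · linarith [(abs_le.1 (hclose x hx.1)).2, hx.2.out]
    · linarith [(abs_le.1 (hclose z hz)).2]

theorem Convex.tendsto_hausdorffDist_inter_halfSpace (hconv : Convex ℝ A)
    (hAb : Bornology.IsBounded A) {z n₀ : E} {c₀ : ℝ} (hz : z ∈ A) (hzc : ⟪z, n₀⟫ < c₀) :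
    Tendsto (fun p : E × ℝ => hausdorffDist (A ∩ {x | ⟪x, p.1⟫ ≤ p.2})
      (A ∩ {x | ⟪x, n₀⟫ ≤ c₀})) (𝓝 (n₀, c₀)) (𝓝 0) := by
  obtain ⟨R, hR⟩ := hAb.exists_norm_le
  set δ := c₀ - ⟪z, n₀⟫
  have hδ : 0 < δ := sub_pos.2 hzc
  set η : E × ℝ → ℝ := fun p => |p.2 - c₀| + R * ‖p.1 - n₀‖
  have hη : Tendsto η (𝓝 (n₀, c₀)) (𝓝 0) := by
    have : Continuous η := by fun_prop
    simpa [η] using this.tendsto (n₀, c₀)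
  have hbound : Tendsto (fun p => η p / (δ / 2) * diam A) (𝓝 (n₀, c₀)) (𝓝 0) := by
    simpa using (hη.div_const (δ / 2)).mul_const (diam A)
  refine squeeze_zero' (Eventually.of_forall fun _ => hausdorffDist_nonneg) ?_ hbound
  filter_upwards [hη.eventually (ge_mem_nhds (half_pos hδ))] with p hp
  exact hconv.hausdorffDist_inter_halfSpace_le hAb hR hz (by simp [δ]) hδ le_rfl hp

section Measure

variable [MeasurableSpace E] (μ : Measure E)

def cutVolume (A : Set E) (n : E) (c : ℝ) : ℝ := μ.real (A ∩ {x | ⟪x, n⟫ ≤ c})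

theorem monotone_cutVolume (hA : μ A ≠ ⊤) (n : E) : Monotone (cutVolume μ A n) :=
  fun _ _ hc => measureReal_mono (inter_subset_inter_right _ fun _ hx => le_trans hx hc)
    (measure_ne_top_of_subset inter_subset_left hA)

theorem exists_mem_lt_inner_of_cutVolume_lt {n : E} {c : ℝ} (h : cutVolume μ A n c < μ.real A) :
    ∃ x ∈ A, c < ⟪x, n⟫ := by
  by_contra! hA
  rw [cutVolume, (inter_eq_left (t := {x | ⟪x, n⟫ ≤ c})).2 hA] at h
  exact h.false

variable [BorelSpace E]

theorem cutVolume_lt_cutVolume [μ.IsOpenPosMeasure] (hA : μ A ≠ ⊤) (hconv : Convex ℝ A)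
    (hint : (interior A).Nonempty) {n p q : E} {c₁ c₂ : ℝ} (hc : c₁ < c₂)
    (hq : q ∈ A) (hqc : ⟪q, n⟫ < c₁) (hp : p ∈ A) (hpc : c₂ < ⟪p, n⟫) :
    cutVolume μ A n c₁ < cutVolume μ A n c₂ := by
  have hφ : Continuous fun x : E => ⟪x, n⟫ := by fun_prop
  obtain ⟨q', hq'A, hq'c : ⟪q', n⟫ < c₁⟩ := hconv.interior_inter_nonempty_of_isOpen hint
    (isOpen_lt hφ continuous_const) ⟨q, hq, hqc⟩
  obtain ⟨p', hp'A, hp'c : c₂ < ⟪p', n⟫⟩ := hconv.interior_inter_nonempty_of_isOpen hint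
    (isOpen_lt continuous_const hφ) ⟨p, hp, hpc⟩
  set U := interior A ∩ {x | c₁ < ⟪x, n⟫ ∧ ⟪x, n⟫ < c₂}
  have hUopen : IsOpen U :=
    isOpen_interior.inter ((isOpen_lt continuous_const hφ).inter (isOpen_lt hφ continuous_const))
  have hUpos : 0 < μ U := by
    obtain ⟨z, hzA, hz : ⟪z, n⟫ = (c₁ + c₂) / 2⟩ :=
      hconv.interior.isPreconnected.intermediate_value hq'A hp'A hφ.continuousOn
        (show (c₁ + c₂) / 2 ∈ Icc ⟪q', n⟫ ⟪p', n⟫ from ⟨by linarith, by linarith⟩)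
    exact hUopen.measure_pos μ ⟨z, hzA, by linarith, by linarith⟩
  have hdisj : Disjoint (A ∩ {x | ⟪x, n⟫ ≤ c₁}) U :=
    disjoint_left.2 fun x hx hxU => not_lt.2 hx.2 hxU.2.1
  have hsub : A ∩ {x | ⟪x, n⟫ ≤ c₁} ∪ U ⊆ A ∩ {x | ⟪x, n⟫ ≤ c₂} :=
    union_subset (inter_subset_inter_right _ fun x hx => le_trans hx hc.le)
      fun x hx => ⟨interior_subset hx.1, hx.2.2.le⟩
  have hfin : ∀ c, μ (A ∩ {x | ⟪x, n⟫ ≤ c}) ≠ ⊤ := fun c =>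
    measure_ne_top_of_subset inter_subset_left hA
  refine (ENNReal.toReal_lt_toReal (hfin c₁) (hfin c₂)).2 ?_
  calc μ (A ∩ {x | ⟪x, n⟫ ≤ c₁}) < μ (A ∩ {x | ⟪x, n⟫ ≤ c₁}) + μ U :=
        ENNReal.lt_add_right (hfin c₁) hUpos.ne'
    _ = μ (A ∩ {x | ⟪x, n⟫ ≤ c₁} ∪ U) := (measure_union hdisj hUopen.measurableSet).symm
    _ ≤ μ (A ∩ {x | ⟪x, n⟫ ≤ c₂}) := measure_mono hsub

variable [FiniteDimensional ℝ E] [μ.IsAddHaarMeasure]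

theorem ae_inner_ne {n : E} (hn : n ≠ 0) (c : ℝ) : ∀ᵐ x ∂μ, ⟪x, n⟫ ≠ c := by
  have hsurj : Function.Surjective (innerₛₗ ℝ n) := by
    refine (innerₛₗ ℝ n).surjective_or_eq_zero.resolve_right fun h => hn ?_
    simpa using LinearMap.congr_fun h n
  have hc : ∀ᵐ t ∂(volume : Measure ℝ), t ∈ ({c}ᶜ : Set ℝ) :=
    compl_mem_ae_iff.2 (measure_singleton c)
  simpa [real_inner_comm] using
    (ae_comp_linearMap_mem_iff _ μ volume hsurj (measurableSet_singleton c).compl).2 hc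

theorem continuousAt_cutVolume (hA : IsCompact A) {n : E} (hn : n ≠ 0) (c : ℝ) :
    ContinuousAt (fun p : E × ℝ => cutVolume μ A p.1 p.2) (n, c) := by
  have hmeas : ∀ p : E × ℝ, MeasurableSet (A ∩ {x | ⟪x, p.1⟫ ≤ p.2}) := fun p =>
    hA.measurableSet.inter (measurableSet_le (by fun_prop) measurable_const)
  have hlim : Tendsto (fun p : E × ℝ => μ (A ∩ {x | ⟪x, p.1⟫ ≤ p.2})) (𝓝 (n, c))
      (𝓝 (μ (A ∩ {x | ⟪x, n⟫ ≤ c}))) := by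
    refine tendsto_measure_of_ae_tendsto_indicator _ (hmeas (n, c)) hmeas hA.measurableSet
      hA.measure_ne_top (Eventually.of_forall fun _ => inter_subset_left) ?_
    filter_upwards [ae_inner_ne μ hn c] with x hx
    -- off the hyperplane, the side of `x` is locally constant in `(n, c)`
    have hcont : ContinuousAt (fun p : E × ℝ => ⟪x, p.1⟫ - p.2) (n, c) := by fun_prop
    rcases hx.lt_or_gt with hlt | hgt
    · filter_upwards [hcont.eventually_lt continuousAt_const (sub_neg.2 hlt)] with p hp
      simp [sub_neg.1 hp |>.le, hlt.le]
    · filter_upwards [continuousAt_const.eventually_lt hcont (sub_pos.2 hgt)] with p hp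
      simp [not_le.2 (sub_pos.1 hp), not_le.2 hgt]
  exact (ENNReal.tendsto_toReal (measure_ne_top_of_subset inter_subset_left
    hA.measure_ne_top)).comp hlim

theorem cutVolume_neg (hA : IsCompact A) {n : E} (hn : n ≠ 0) (c : ℝ) :
    cutVolume μ A (-n) (-c) = μ.real A - cutVolume μ A n c := by
  have hcut : A ∩ {x | ⟪x, -n⟫ ≤ -c} = A ∩ {x | c ≤ ⟪x, n⟫} := by
    ext x; simp [inner_neg_right]
  -- `A \ {c ≤ ⟪·, n⟫}` and `A ∩ {⟪·, n⟫ ≤ c}` differ by a piece of a hyperplane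
  have hdiff : μ.real (A \ {x | c ≤ ⟪x, n⟫}) = cutVolume μ A n c := by
    refine measureReal_congr ((ae_inner_ne μ hn c).mono fun x hx => ?_)
    change (x ∈ A \ {x | c ≤ ⟪x, n⟫}) = (x ∈ A ∩ {x | ⟪x, n⟫ ≤ c})
    simp [lt_iff_le_and_ne, hx]
  rw [cutVolume, hcut, ← hdiff]
  exact eq_sub_of_add_eq (measureReal_inter_add_sdiff
    (measurableSet_le measurable_const (by fun_prop)) hA.measure_ne_top)

theorem exists_mem_inner_lt_of_cutVolume_pos {n : E} (hn : n ≠ 0) {c : ℝ}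
    (h : 0 < cutVolume μ A n c) : ∃ x ∈ A, ⟪x, n⟫ < c := by
  by_contra! hA
  have hnull : μ (A ∩ {x | ⟪x, n⟫ ≤ c}) = 0 :=
    measure_mono_null (fun x hx => not_not.2 (le_antisymm hx.2 (hA x hx.1)))
      (ae_iff.1 (ae_inner_ne μ hn c))
  simp [cutVolume, Measure.real, hnull] at h

theorem exists_cutVolume_eq_half (hA : IsCompact A) {n : E} (hn : n ≠ 0) :
    ∃ c, cutVolume μ A n c = μ.real A / 2 := by
  have hcont : Continuous (cutVolume μ A n) := continuous_iff_continuousAt.2 fun c =>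
    (continuousAt_cutVolume μ hA hn c).comp (f := fun c => (n, c)) (by fun_prop)
  obtain ⟨a, ha⟩ := hA.bddBelow_image (f := fun x => ⟪x, n⟫) (by fun_prop)
  obtain ⟨b, hb⟩ := hA.bddAbove_image (f := fun x => ⟪x, n⟫) (by fun_prop)
  refine mem_range_of_exists_le_of_exists_ge hcont ⟨a - 1, ?_⟩ ⟨b, ?_⟩
  · have hempty : A ∩ {x | ⟪x, n⟫ ≤ a - 1} = ∅ := eq_empty_of_forall_notMem fun x hx => by
      linarith [hx.2.out, ha (mem_image_of_mem _ hx.1)]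
    rw [cutVolume, hempty, measureReal_empty]
    exact div_nonneg measureReal_nonneg zero_le_two
  · rw [cutVolume, (inter_eq_left (t := {x | ⟪x, n⟫ ≤ b})).2
      fun x hx => hb (mem_image_of_mem _ hx)]
    linarith [measureReal_nonneg (μ := μ) (s := A)]

-- For a convex body and `n ≠ 0` this level exists and is unique; `0` is a junk value.
open Classical in
def bisectLevel (A : Set E) (n : E) : ℝ :=
  if h : ∃ c, cutVolume μ A n c = μ.real A / 2 then h.choose else 0

def lowerHalf (A : Set E) (n : E) : Set E := A ∩ {x | ⟪x, n⟫ ≤ bisectLevel μ A n}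

theorem cutVolume_bisectLevel (hA : IsCompact A) {n : E} (hn : n ≠ 0) :
    cutVolume μ A n (bisectLevel μ A n) = μ.real A / 2 := by
  rw [bisectLevel, dif_pos (exists_cutVolume_eq_half μ hA hn)]
  exact (exists_cutVolume_eq_half μ hA hn).choose_spec

theorem bisectLevel_eq_of_cutVolume_eq (hA : IsCompact A) (hconv : Convex ℝ A)
    (hint : (interior A).Nonempty) {n : E} (hn : n ≠ 0) {c : ℝ}
    (hc : cutVolume μ A n c = μ.real A / 2) : bisectLevel μ A n = c := by
  have hpos : 0 < μ.real A :=
    ENNReal.toReal_pos (μ.measure_pos_of_nonempty_interior hint).ne' hA.measure_ne_top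
  have hne : ∀ c₁ c₂, cutVolume μ A n c₁ = μ.real A / 2 → cutVolume μ A n c₂ = μ.real A / 2 →
      ¬ c₁ < c₂ := fun c₁ c₂ h₁ h₂ hlt => by
    obtain ⟨q, hq, hqc⟩ := exists_mem_inner_lt_of_cutVolume_pos μ hn (c := c₁) (by linarith)
    obtain ⟨p, hp, hpc⟩ := exists_mem_lt_inner_of_cutVolume_lt μ (n := n) (c := c₂) (by linarith)
    have := cutVolume_lt_cutVolume μ hA.measure_ne_top hconv hint hlt hq hqc hp hpc
    linarith
  have hb := cutVolume_bisectLevel μ hA hn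
  exact le_antisymm (not_lt.1 (hne _ _ hc hb)) (not_lt.1 (hne _ _ hb hc))

theorem lt_bisectLevel_iff (hA : IsCompact A) (hconv : Convex ℝ A)
    (hint : (interior A).Nonempty) {n : E} (hn : n ≠ 0) {a : ℝ} :
    a < bisectLevel μ A n ↔ cutVolume μ A n a < μ.real A / 2 := by
  have hb := cutVolume_bisectLevel μ hA hn
  refine ⟨fun ha => lt_of_le_of_ne ?_ fun h => ?_, fun h => ?_⟩
  · exact hb ▸ monotone_cutVolume μ hA.measure_ne_top n ha.le
  · exact ha.ne (bisectLevel_eq_of_cutVolume_eq μ hA hconv hint hn h).symm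
  · by_contra! hle
    linarith [monotone_cutVolume μ hA.measure_ne_top n hle]

theorem bisectLevel_lt_iff (hA : IsCompact A) (hconv : Convex ℝ A)
    (hint : (interior A).Nonempty) {n : E} (hn : n ≠ 0) {b : ℝ} :
    bisectLevel μ A n < b ↔ μ.real A / 2 < cutVolume μ A n b := by
  have hb := cutVolume_bisectLevel μ hA hn
  refine ⟨fun hb' => lt_of_le_of_ne ?_ fun h => ?_, fun h => ?_⟩
  · exact hb ▸ monotone_cutVolume μ hA.measure_ne_top n hb'.le
  · exact hb'.ne (bisectLevel_eq_of_cutVolume_eq μ hA hconv hint hn h.symm)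
  · by_contra! hle
    linarith [monotone_cutVolume μ hA.measure_ne_top n hle]

theorem continuousAt_bisectLevel (hA : IsCompact A) (hconv : Convex ℝ A)
    (hint : (interior A).Nonempty) {n₀ : E} (hn₀ : n₀ ≠ 0) :
    ContinuousAt (bisectLevel μ A) n₀ := by
  have hcut : ∀ c, ContinuousAt (fun n => cutVolume μ A n c) n₀ := fun c =>
    (continuousAt_cutVolume μ hA hn₀ c).comp (f := fun n => (n, c)) (by fun_prop)
  refine tendsto_order.2 ⟨fun a ha => ?_, fun b hb => ?_⟩
  · filter_upwards [eventually_ne_nhds hn₀, (hcut a).eventually_lt continuousAt_const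
      ((lt_bisectLevel_iff μ hA hconv hint hn₀).1 ha)] with n hn h
    exact (lt_bisectLevel_iff μ hA hconv hint hn).2 h
  · filter_upwards [eventually_ne_nhds hn₀, continuousAt_const.eventually_lt (hcut b)
      ((bisectLevel_lt_iff μ hA hconv hint hn₀).1 hb)] with n hn h
    exact (bisectLevel_lt_iff μ hA hconv hint hn).2 h

theorem lowerHalf_neg (hA : IsCompact A) (hconv : Convex ℝ A)
    (hint : (interior A).Nonempty) {n : E} (hn : n ≠ 0) :
    lowerHalf μ A (-n) = A ∩ {x | bisectLevel μ A n ≤ ⟪x, n⟫} := by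
  have hneg : bisectLevel μ A (-n) = -bisectLevel μ A n := by
    refine bisectLevel_eq_of_cutVolume_eq μ hA hconv hint (neg_ne_zero.2 hn) ?_
    rw [cutVolume_neg μ hA hn, cutVolume_bisectLevel μ hA hn]
    ring
  ext x
  simp [lowerHalf, hneg, inner_neg_right]

theorem measure_lowerHalf_neg (hA : IsCompact A) {n : E} (hn : n ≠ 0) :
    μ (lowerHalf μ A (-n)) = μ (lowerHalf μ A n) := by
  have hfin : ∀ m, μ (lowerHalf μ A m) ≠ ⊤ := fun m =>
    measure_ne_top_of_subset inter_subset_left hA.measure_ne_top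
  refine (ENNReal.toReal_eq_toReal_iff' (hfin _) (hfin _)).1 ?_
  exact (cutVolume_bisectLevel μ hA (neg_ne_zero.2 hn)).trans (cutVolume_bisectLevel μ hA hn).symm

theorem exists_mem_inner_lt_bisectLevel (hA : IsCompact A) (hint : (interior A).Nonempty)
    {n : E} (hn : n ≠ 0) : ∃ z ∈ A, ⟪z, n⟫ < bisectLevel μ A n := by
  have hpos : 0 < μ.real A :=
    ENNReal.toReal_pos (μ.measure_pos_of_nonempty_interior hint).ne' hA.measure_ne_top
  exact exists_mem_inner_lt_of_cutVolume_pos μ hn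
    (by rw [cutVolume_bisectLevel μ hA hn]; positivity)

theorem tendsto_hausdorffDist_lowerHalf (hA : IsCompact A) (hconv : Convex ℝ A)
    (hint : (interior A).Nonempty) {n₀ : E} (hn₀ : n₀ ≠ 0) :
    Tendsto (fun n => hausdorffDist (lowerHalf μ A n) (lowerHalf μ A n₀)) (𝓝 n₀) (𝓝 0) := by
  obtain ⟨z, hz, hzc⟩ := exists_mem_inner_lt_bisectLevel μ hA hint hn₀
  have hlevel : Tendsto (fun n => (n, bisectLevel μ A n)) (𝓝 n₀)
      (𝓝 (n₀, bisectLevel μ A n₀)) :=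
    continuousAt_id.prodMk (continuousAt_bisectLevel μ hA hconv hint hn₀)
  have hcut := (hconv.tendsto_hausdorffDist_inter_halfSpace hA.isBounded hz hzc).comp hlevel
  simp only [Function.comp_def] at hcut
  exact hcut

end Measure

theorem exists_apply_eq_apply_neg {X : Type*} [TopologicalSpace X] [PreconnectedSpace X]
    [Nonempty X] [InvolutiveNeg X] [ContinuousNeg X] {φ : X → ℝ} (hφ : Continuous φ) :
    ∃ x, φ x = φ (-x) := by
  obtain ⟨x₀⟩ := ‹Nonempty X›
  rcases le_total (φ x₀) (φ (-x₀)) with h | h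
  · exact intermediate_value_univ₂ (a := x₀) (b := -x₀) hφ (hφ.comp continuous_neg) h
      (by rwa [neg_neg])
  · exact intermediate_value_univ₂ (a := -x₀) (b := x₀) hφ (hφ.comp continuous_neg)
      (by rwa [neg_neg]) h

theorem isConvexBody_lowerHalf {d : ℕ} {A : Set (EuclideanSpace ℝ (Fin d))}
    (hA : IsConvexBody A) {n : EuclideanSpace ℝ (Fin d)} (hn : n ≠ 0) :
    IsConvexBody (lowerHalf volume A n) := by
  obtain ⟨hAc, hconv, hint⟩ := hA
  have hφ : Continuous fun x : EuclideanSpace ℝ (Fin d) => ⟪x, n⟫ := by fun_prop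
  refine ⟨hAc.inter_right (isClosed_le hφ continuous_const), hconv.inter (convex_halfSpace_le
    ⟨fun x y => inner_add_left x y n, fun c x => real_inner_smul_left x n c⟩ _), ?_⟩
  obtain ⟨z, hz, hzc⟩ := exists_mem_inner_lt_bisectLevel volume hAc hint hn
  obtain ⟨y, hy⟩ := hconv.interior_inter_nonempty_of_isOpen hint
    (isOpen_lt hφ continuous_const) ⟨z, hz, hzc⟩
  have hsub : interior A ∩ {x | ⟪x, n⟫ < bisectLevel volume A n} ⊆ lowerHalf volume A n :=
    inter_subset_inter interior_subset fun x (hx : ⟪x, n⟫ < _) => hx.le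
  exact ⟨y, (isOpen_interior.inter (isOpen_lt hφ continuous_const)).subset_interior_iff.2 hsub hy⟩

namespace ConvexBodySpace

variable {d : ℕ}

theorem isConvexBody_toSet (K : ConvexBodySpace d) : IsConvexBody K.toSet :=
  ⟨K.1.isCompact, K.2.1, K.2.2⟩

theorem mk'_congr {S T : Set (EuclideanSpace ℝ (Fin d))} (hST : S = T) (hS : IsConvexBody S)
    (hT : IsConvexBody T) : mk' S hS = mk' T hT := by
  subst hST; rfl

def lowerHalfBody (K : ConvexBodySpace d) (n : sphere (0 : EuclideanSpace ℝ (Fin d)) 1) :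
    ConvexBodySpace d :=
  mk' (lowerHalf volume K.toSet n)
    (isConvexBody_lowerHalf K.isConvexBody_toSet (ne_zero_of_mem_unit_sphere n))

theorem continuous_lowerHalfBody (K : ConvexBodySpace d) : Continuous K.lowerHalfBody := by
  obtain ⟨hK, hconv, hint⟩ := K.isConvexBody_toSet
  refine continuous_iff_continuousAt.2 fun n₀ => tendsto_iff_dist_tendsto_zero.2 ?_
  exact (tendsto_hausdorffDist_lowerHalf volume hK hconv hint
    (ne_zero_of_mem_unit_sphere n₀)).comp continuous_subtype_val.continuousAt

theorem exists_halving_cut_apply_eq (hd : 2 ≤ d) (K : ConvexBodySpace d)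
    (f : ConvexBodySpace d → ℝ) (hf : Continuous f) :
    ∃ (n : EuclideanSpace ℝ (Fin d)) (c : ℝ), ‖n‖ = 1 ∧
      ∃ (h₁ : IsConvexBody (K.toSet ∩ {x | ⟪x, n⟫ ≤ c}))
        (h₂ : IsConvexBody (K.toSet ∩ {x | c ≤ ⟪x, n⟫})),
        volume (K.toSet ∩ {x | ⟪x, n⟫ ≤ c}) =
          volume (K.toSet ∩ {x | c ≤ ⟪x, n⟫}) ∧
        f (mk' _ h₁) = f (mk' _ h₂) := by
  have hrank : 1 < Module.rank ℝ (EuclideanSpace ℝ (Fin d)) := by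
    rw [← Module.finrank_eq_rank, finrank_euclideanSpace_fin]
    exact_mod_cast hd
  have : Nontrivial (EuclideanSpace ℝ (Fin d)) :=
    Module.nontrivial_of_finrank_pos (by rw [finrank_euclideanSpace_fin]; omega)
  have : PreconnectedSpace (sphere (0 : EuclideanSpace ℝ (Fin d)) 1) :=
    isPreconnected_iff_preconnectedSpace.1 (isPreconnected_sphere hrank 0 1)
  have : Nonempty (sphere (0 : EuclideanSpace ℝ (Fin d)) 1) :=
    (NormedSpace.sphere_nonempty.2 zero_le_one).to_subtype
  obtain ⟨n, hn⟩ := exists_apply_eq_apply_neg (hf.comp K.continuous_lowerHalfBody)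
  have hn₀ := ne_zero_of_mem_unit_sphere n
  obtain ⟨hK, hconv, hint⟩ := K.isConvexBody_toSet
  have hupper := lowerHalf_neg volume hK hconv hint hn₀
  refine ⟨n, bisectLevel volume K.toSet n, norm_eq_of_mem_sphere n,
    isConvexBody_lowerHalf K.isConvexBody_toSet hn₀,
    hupper ▸ isConvexBody_lowerHalf K.isConvexBody_toSet (neg_ne_zero.2 hn₀),
    hupper ▸ (measure_lowerHalf_neg volume hK hn₀).symm,
    hn.trans (congrArg f (mk'_congr (by rw [coe_neg_sphere, hupper]) _ _))⟩

end ConvexBodySpace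

/-- For any convex body `K ⊂ ℝ²` and any Hausdorff-continuous function `f` on convex
bodies, some line cuts `K` into two convex bodies of equal area and equal value of `f`. -/
theorem statement11 (K : ConvexBodySpace 2)
    (f : ConvexBodySpace 2 → ℝ) (hf : Continuous f) :
    ∃ (n : EuclideanSpace ℝ (Fin 2)) (c : ℝ), ‖n‖ = 1 ∧
      ∃ (h₁ : IsConvexBody (K.toSet ∩ {x | ⟪x, n⟫ ≤ c}))
        (h₂ : IsConvexBody (K.toSet ∩ {x | c ≤ ⟪x, n⟫})),
        volume (K.toSet ∩ {x | ⟪x, n⟫ ≤ c}) =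
          volume (K.toSet ∩ {x | c ≤ ⟪x, n⟫}) ∧
        f (ConvexBodySpace.mk' _ h₁) = f (ConvexBodySpace.mk' _ h₂) :=
  ConvexBodySpace.exists_halving_cut_apply_eq le_rfl K f hf
end
end
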